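/- arXiv:1703.10509 — 2 statements merged into one kernel-verified Lean document; each statement's English description precedes it below -/
import Mathlib

section
/- Pohozaev-type identity for bound states: Let d ≥ 1, γ₁, γ₂ > 0, β, ω ∈ ℝ, and let P, Q : ℝ^{d+1} → ℝ be real-valued Schwartz functions solving −ωP + Δ_{γ₁}P + PQ = 0 and −(4ω+β)Q + Δ_{γ₂}Q + ½P² = 0 pointwise. Then ∫_{ℝ^{d+1}} (|∇P|²_{γ₁} + |∇Q|²_{γ₂}) dx = ((d+1)/4) ∫_{ℝ^{d+1}} P²Q dx. -/
noncomputable section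

open MeasureTheory Complex Finset

/-- The underlying space `ℝ^{d+1}`. -/
abbrev Sp (d : ℕ) := EuclideanSpace ℝ (Fin (d + 1))

variable {d : ℕ}

/-- Partial derivative in the `j`-th coordinate direction. -/
def pdv {F : Type*} [NormedAddCommGroup F] [NormedSpace ℝ F]
    (j : Fin (d + 1)) (f : Sp d → F) (x : Sp d) : F :=
  fderiv ℝ f x (EuclideanSpace.single j 1)

/-- Anisotropic gradient square `|∇f|²_γ = Σ_{j=1}^d |∂_j f|² + γ|∂_{d+1} f|²`. -/
def gradSq {F : Type*} [NormedAddCommGroup F] [NormedSpace ℝ F]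
    (γ : ℝ) (f : Sp d → F) (x : Sp d) : ℝ :=
  (∑ j : Fin d, ‖pdv j.castSucc f x‖ ^ 2) + γ * ‖pdv (Fin.last d) f x‖ ^ 2

/-- Full (isotropic) gradient square `|∇f|² = Σ_{j=1}^{d+1} |∂_j f|²`. -/
def fullGradSq {F : Type*} [NormedAddCommGroup F] [NormedSpace ℝ F]
    (f : Sp d → F) (x : Sp d) : ℝ :=
  ∑ j : Fin (d + 1), ‖pdv j f x‖ ^ 2

/-- Transverse gradient square `|∇_⊥ f|² = Σ_{j=1}^{d} |∂_j f|²`. -/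
def perpGradSq {F : Type*} [NormedAddCommGroup F] [NormedSpace ℝ F]
    (f : Sp d → F) (x : Sp d) : ℝ :=
  ∑ j : Fin d, ‖pdv j.castSucc f x‖ ^ 2

/-- Anisotropic Laplacian `Δ_γ = ∂²_{x₁} + … + ∂²_{x_d} + γ ∂²_{x_{d+1}}`. -/
def lap {F : Type*} [NormedAddCommGroup F] [NormedSpace ℝ F]
    (γ : ℝ) (f : Sp d → F) (x : Sp d) : F :=
  (∑ j : Fin d, pdv j.castSucc (fun y => pdv j.castSucc f y) x)
    + γ • pdv (Fin.last d) (fun y => pdv (Fin.last d) f y) x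

/-- Mass `M(u,v) = ∫ (|u|² + 4|v|²)`. -/
def mass (u v : Sp d → ℂ) : ℝ :=
  ∫ x : Sp d, (‖u x‖ ^ 2 + 4 * ‖v x‖ ^ 2)

/-- Energy `E(u,v) = ½∫ (|∇u|²_{γ₁} + |∇v|²_{γ₂} + β|v|² − Re(ū²v))`. -/
def energy (γ₁ γ₂ β : ℝ) (u v : Sp d → ℂ) : ℝ :=
  (1 / 2) * ∫ x : Sp d,
    (gradSq γ₁ u x + gradSq γ₂ v x + β * ‖v x‖ ^ 2 - ((starRingEnd ℂ) (u x) ^ 2 * v x).re)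

/-- `J(u,v) = Re ∫ ū² v`. -/
def Jfun (u v : Sp d → ℂ) : ℝ :=
  ∫ x : Sp d, ((starRingEnd ℂ) (u x) ^ 2 * v x).re

/-- `K(u,v) = ∫ (|∇u|²_{γ₁} + |∇v|²_{γ₂})`. -/
def Kfun (γ₁ γ₂ : ℝ) (u v : Sp d → ℂ) : ℝ :=
  ∫ x : Sp d, (gradSq γ₁ u x + gradSq γ₂ v x)

/-- `x^γ · ∇f` where `x^γ = (x₁,…,x_d, γ x_{d+1})`. -/
def xgDot (γ : ℝ) (f : Sp d → ℂ) (x : Sp d) : ℂ :=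
  (∑ j : Fin d, (x j.castSucc : ℂ) * pdv j.castSucc f x)
    + ((γ * x (Fin.last d) : ℝ) : ℂ) * pdv (Fin.last d) f x

/-- `x_⊥ · ∇_⊥ f`. -/
def perpDot (f : Sp d → ℂ) (x : Sp d) : ℂ :=
  ∑ j : Fin d, (x j.castSucc : ℂ) * pdv j.castSucc f x

/-- `|x_⊥|²`. -/
def perpNormSq (x : Sp d) : ℝ := ∑ j : Fin d, (x j.castSucc) ^ 2

/-- Energy for real-valued pairs with `β = 0`:
`E(P,Q) = ½∫ (|∇P|²_{γ₁} + |∇Q|²_{γ₂} − P²Q)`. -/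
def energyR (γ₁ γ₂ : ℝ) (P Q : Sp d → ℝ) : ℝ :=
  (1 / 2) * ∫ x : Sp d, (gradSq γ₁ P x + gradSq γ₂ Q x - (P x) ^ 2 * Q x)

/-- Gagliardo–Nirenberg quotient `GN(u,v) = M^{3/2-(d+1)/4} K^{(d+1)/4} / J`. -/
def GNq (γ₁ γ₂ : ℝ) (u v : Sp d → ℂ) : ℝ :=
  mass u v ^ ((3 : ℝ) / 2 - ((d : ℝ) + 1) / 4)
    * Kfun γ₁ γ₂ u v ^ (((d : ℝ) + 1) / 4) / Jfun u v

/-!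
Testing `Δ_γ u = c u - N` against `u` and against the Euler field `x · ∇u` gives
`∫ |∇u|²_γ = -c ∫ u² + ∫ N u` and, after integrating by parts, the virial identity
`((d - 1) / 2) ∫ |∇u|²_γ = -c ((d + 1) / 2) ∫ u² - ∫ N (x · ∇u)`; eliminating `c`,
`∫ |∇u|²_γ = ((d + 1) / 2) ∫ N u + ∫ N (x · ∇u)`. In the system `N = P Q` for `u = P` and
`N = P² / 2` for `u = Q`: the `∫ N u` terms add up to `(3 / 2) ∫ P² Q`, and the Euler terms to
`(1 / 2) ∫ x · ∇(P² Q) = -((d + 1) / 2) ∫ P² Q`.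
-/

open LineDeriv Module

namespace SchwartzMap

variable {E F : Type*} [NormedAddCommGroup E] [NormedSpace ℝ E]
  [NormedAddCommGroup F] [NormedSpace ℝ F]

def euler : 𝓢(E, F) →L[ℝ] 𝓢(E, F) :=
  (bilinLeftCLM (.id ℝ (E →L[ℝ] F)) (ContinuousLinearMap.id ℝ E).hasTemperateGrowth).comp
    (fderivCLM ℝ E F)

@[simp]
theorem euler_apply (f : 𝓢(E, F)) (x : E) : euler f x = fderiv ℝ f x x := rfl

theorem differentiableAt_fderiv (f : 𝓢(E, F)) (x : E) : DifferentiableAt ℝ (fderiv ℝ f) x :=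
  (fderivCLM ℝ E F f).differentiableAt

theorem lineDerivOp_lineDerivOp_apply (v w : E) (f : 𝓢(E, F)) (x : E) :
    ∂_{v} (∂_{w} f) x = fderiv ℝ (fderiv ℝ f) x v w := by
  change fderiv ℝ (fun y => fderiv ℝ f y w) x v = _
  rw [fderiv_clm_apply (f.differentiableAt_fderiv x) (differentiableAt_const w)]
  simp

theorem lineDerivOp_comm (v w : E) (f : 𝓢(E, F)) : ∂_{v} (∂_{w} f) = ∂_{w} (∂_{v} f) := by
  ext x
  rw [lineDerivOp_lineDerivOp_apply, lineDerivOp_lineDerivOp_apply]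
  exact ((f.smooth 2).contDiffAt.isSymmSndFDerivAt (by simp)).eq _ _

theorem lineDerivOp_euler (v : E) (f : 𝓢(E, F)) :
    ∂_{v} (euler f) = ∂_{v} f + euler (∂_{v} f) := by
  ext x
  change fderiv ℝ (fun y => fderiv ℝ f y (id y)) x v = ∂_{v} f x + ∂_{x} (∂_{v} f) x
  rw [fderiv_clm_apply (f.differentiableAt_fderiv x) differentiableAt_id, ← lineDerivOp_comm,
    lineDerivOp_lineDerivOp_apply]
  simp [lineDerivOp_apply_eq_fderiv]

theorem euler_mul (f g : 𝓢(E, ℝ)) (x : E) :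
    euler (pairing (.mul ℝ ℝ) f g) x = euler f x * g x + f x * euler g x := by
  change fderiv ℝ (fun y => f y * g y) x x = _
  rw [fderiv_fun_mul f.differentiableAt g.differentiableAt]
  simp only [euler_apply, add_apply, smul_apply, smul_eq_mul]
  ring

variable [FiniteDimensional ℝ E] [MeasurableSpace E] [BorelSpace E] {μ : Measure E}
  [μ.IsAddHaarMeasure]

theorem integrable_clm_smul (φ : E →L[ℝ] ℝ) (g : 𝓢(E, F)) :
    Integrable (fun x => φ x • g x) μ := by
  convert (smulLeftCLM F φ g).integrable (μ := μ) using 1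
  ext x
  simp [φ.hasTemperateGrowth]

theorem integral_euler (h : 𝓢(E, F)) :
    ∫ x, euler h x ∂μ = -(finrank ℝ E : ℝ) • ∫ x, h x ∂μ := by
  let b := finBasis ℝ E
  let φ : Fin (finrank ℝ E) → E →L[ℝ] ℝ := fun i => LinearMap.toContinuousLinearMap (b.coord i)
  have hexpand : ∀ x, euler h x = ∑ i, φ i x • ∂_{b i} h x := by
    intro x
    rw [euler_apply]
    nth_rewrite 2 [← b.sum_repr x]
    simp only [map_sum, map_smul, lineDerivOp_apply_eq_fderiv]
    rfl
  have hibp : ∀ i, ∫ x, φ i x • ∂_{b i} h x ∂μ = -∫ x, h x ∂μ := by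
    intro i
    have hφ : ∀ x, fderiv ℝ (φ i) x (b i) = 1 := fun x => by
      rw [(φ i).fderiv]
      simp [φ]
    have := integral_smul_fderiv_eq_neg_fderiv_smul_of_integrable (μ := μ) (f := φ i) (g := h)
      (v := b i) (by simpa only [hφ, one_smul] using h.integrable (μ := μ))
      (integrable_clm_smul (φ i) (∂_{b i} h)) (integrable_clm_smul (φ i) h)
      (fun x _ => (φ i).differentiableAt) (fun x _ => h.differentiableAt)
    simp only [hφ, one_smul] at this
    exact this
  simp_rw [hexpand]
  rw [integral_finsetSum _ (fun i _ => integrable_clm_smul (φ i) (∂_{b i} h))]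
  simp [hibp, Nat.cast_smul_eq_nsmul]

theorem integrable_mul (f g : 𝓢(E, ℝ)) : Integrable (fun x => f x * g x) μ :=
  (pairing (.mul ℝ ℝ) f g).integrable

theorem integrable_sq (f : 𝓢(E, ℝ)) : Integrable (fun x => f x ^ 2) μ := by
  simpa only [sq] using integrable_mul f f

theorem integral_mul_euler_self (u : 𝓢(E, ℝ)) :
    ∫ x, u x * euler u x ∂μ = -(finrank ℝ E / 2 : ℝ) * ∫ x, u x ^ 2 ∂μ := by
  have h := integral_euler (μ := μ) (pairing (.mul ℝ ℝ) u u)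
  simp only [euler_mul, pairing_apply_apply, ContinuousLinearMap.mul_apply', smul_eq_mul] at h
  calc ∫ x, u x * euler u x ∂μ = (1 / 2) * ∫ x, (euler u x * u x + u x * euler u x) ∂μ := by
        rw [← integral_const_mul]; congr with x; ring
    _ = _ := by rw [h]; simp only [sq]; ring

theorem integral_lineDerivOp_lineDerivOp_mul_self (u : 𝓢(E, ℝ)) (v : E) :
    ∫ x, ∂_{v} (∂_{v} u) x * u x ∂μ = -∫ x, ∂_{v} u x ^ 2 ∂μ := by
  have h := integral_mul_lineDerivOp_right_eq_neg_left (μ := μ) u (∂_{v} u) v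
  simp only [mul_comm (u _), ← sq] at h
  exact h

theorem integral_lineDerivOp_lineDerivOp_mul_euler (u : 𝓢(E, ℝ)) (v : E) :
    ∫ x, ∂_{v} (∂_{v} u) x * euler u x ∂μ
      = (finrank ℝ E / 2 - 1 : ℝ) * ∫ x, ∂_{v} u x ^ 2 ∂μ := by
  have hibp := integral_mul_lineDerivOp_right_eq_neg_left (μ := μ) (euler u) (∂_{v} u) v
  simp only [lineDerivOp_euler, add_apply] at hibp
  have hsplit : ∫ x, (∂_{v} u x + euler (∂_{v} u) x) * ∂_{v} u x ∂μ
      = ∫ x, ∂_{v} u x ^ 2 ∂μ + ∫ x, ∂_{v} u x * euler (∂_{v} u) x ∂μ := by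
    rw [← integral_add (integrable_sq _) (integrable_mul _ _)]
    congr with x; ring
  rw [hsplit, integral_mul_euler_self] at hibp
  simp only [mul_comm (∂_{v} (∂_{v} u) _), hibp]
  ring

theorem integral_sum_mul {ι : Type*} (s : Finset ι) (a : ι → ℝ) (f : ι → 𝓢(E, ℝ))
    (g : 𝓢(E, ℝ)) :
    ∫ x, (∑ i ∈ s, a i * f i x) * g x ∂μ = ∑ i ∈ s, a i * ∫ x, f i x * g x ∂μ := by
  simp_rw [Finset.sum_mul, mul_assoc]
  rw [integral_finsetSum _ fun i _ => (integrable_mul _ _).const_mul _]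
  simp_rw [integral_const_mul]

theorem integral_sub_mul (c : ℝ) (u N g : 𝓢(E, ℝ)) :
    ∫ x, (c * u x - N x) * g x ∂μ = c * ∫ x, u x * g x ∂μ - ∫ x, N x * g x ∂μ := by
  simp_rw [sub_mul, mul_assoc]
  rw [integral_sub ((integrable_mul _ _).const_mul _) (integrable_mul _ _), integral_const_mul]

theorem sum_mul_integral_lineDerivOp_sq_of_eq {ι : Type*} (s : Finset ι) (a : ι → ℝ)
    (v : ι → E) (c : ℝ) (u N : 𝓢(E, ℝ))
    (h : ∀ x, ∑ i ∈ s, a i * ∂_{v i} (∂_{v i} u) x = c * u x - N x) :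
    ∑ i ∈ s, a i * ∫ x, ∂_{v i} u x ^ 2 ∂μ
      = (finrank ℝ E / 2 : ℝ) * ∫ x, N x * u x ∂μ + ∫ x, N x * euler u x ∂μ := by
  have htest : ∀ g : 𝓢(E, ℝ), ∑ i ∈ s, a i * ∫ x, ∂_{v i} (∂_{v i} u) x * g x ∂μ
      = c * ∫ x, u x * g x ∂μ - ∫ x, N x * g x ∂μ := fun g => by
    rw [← integral_sum_mul, ← integral_sub_mul]
    simp_rw [h]
  have hself := htest u
  have heuler := htest (euler u)
  simp only [integral_lineDerivOp_lineDerivOp_mul_self, integral_lineDerivOp_lineDerivOp_mul_euler,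
    integral_mul_euler_self, ← sq, mul_neg, Finset.sum_neg_distrib, mul_left_comm (a _),
    ← Finset.mul_sum] at hself heuler
  linear_combination -(finrank ℝ E / 2 : ℝ) * hself - heuler

theorem integral_mul_mul_euler_add_sq_mul_euler (P Q : 𝓢(E, ℝ)) :
    ∫ x, P x * Q x * euler P x ∂μ + ∫ x, P x ^ 2 / 2 * euler Q x ∂μ
      = -(finrank ℝ E / 2 : ℝ) * ∫ x, P x ^ 2 * Q x ∂μ := by
  have h := integral_euler (μ := μ) (pairing (.mul ℝ ℝ) (pairing (.mul ℝ ℝ) P P) Q)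
  simp only [euler_mul, pairing_apply_apply, ContinuousLinearMap.mul_apply', smul_eq_mul] at h
  have hPQ : Integrable (fun x => P x * Q x * euler P x) μ :=
    integrable_mul (pairing (.mul ℝ ℝ) P Q) (euler P)
  have hPP : Integrable (fun x => P x ^ 2 / 2 * euler Q x) μ := by
    refine ((integrable_mul (pairing (.mul ℝ ℝ) P P) (euler Q)).div_const 2).congr
      (.of_forall fun x => ?_)
    simp only [pairing_apply_apply, ContinuousLinearMap.mul_apply']
    ring
  rw [← integral_add hPQ hPP]
  calc ∫ x, (P x * Q x * euler P x + P x ^ 2 / 2 * euler Q x) ∂μ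
      = (1 / 2) * ∫ x, ((euler P x * P x + P x * euler P x) * Q x + P x * P x * euler Q x) ∂μ := by
        rw [← integral_const_mul]; congr with x; ring
    _ = _ := by rw [h]; simp only [sq]; ring

end SchwartzMap

section Anisotropic

open SchwartzMap

def anisoWeight (γ : ℝ) (k : Fin (d + 1)) : ℝ := if k = Fin.last d then γ else 1

theorem sum_anisoWeight_mul (γ : ℝ) (f : Fin (d + 1) → ℝ) :
    ∑ k, anisoWeight γ k * f k = ∑ j : Fin d, f j.castSucc + γ * f (Fin.last d) := by
  simp [Fin.sum_univ_castSucc, anisoWeight, Fin.castSucc_ne_last]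

theorem lap_eq_sum (γ : ℝ) (u : 𝓢(Sp d, ℝ)) (x : Sp d) :
    lap γ u x = ∑ k, anisoWeight γ k *
      ∂_{(EuclideanSpace.single k 1 : Sp d)} (∂_{(EuclideanSpace.single k 1 : Sp d)} u) x := by
  rw [sum_anisoWeight_mul]
  rfl

theorem gradSq_eq_sum (γ : ℝ) (u : 𝓢(Sp d, ℝ)) (x : Sp d) :
    gradSq γ u x = ∑ k, anisoWeight γ k * ∂_{(EuclideanSpace.single k 1 : Sp d)} u x ^ 2 := by
  rw [sum_anisoWeight_mul]
  simp only [gradSq, Real.norm_eq_abs, sq_abs]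
  rfl

theorem integrable_gradSq (γ : ℝ) (u : 𝓢(Sp d, ℝ)) : Integrable (gradSq γ u) := by
  simp_rw [funext (gradSq_eq_sum γ u)]
  exact integrable_finsetSum _ fun k _ => (integrable_sq _).const_mul _

theorem integral_gradSq_of_lap_eq (γ c : ℝ) (u N : 𝓢(Sp d, ℝ))
    (h : ∀ x, lap γ u x = c * u x - N x) :
    ∫ x, gradSq γ u x = ((d + 1) / 2 : ℝ) * (∫ x, N x * u x) + ∫ x, N x * euler u x := by
  simp_rw [gradSq_eq_sum]
  rw [integral_finsetSum _ fun k _ => (integrable_sq _).const_mul _]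
  simp_rw [integral_const_mul]
  rw [sum_mul_integral_lineDerivOp_sq_of_eq _ _ _ c u N fun x =>
    (lap_eq_sum γ u x).symm.trans (h x)]
  simp only [finrank_euclideanSpace_fin, Nat.cast_add, Nat.cast_one]

end Anisotropic

theorem pohozaev_identity_general
    (d : ℕ) (γ₁ γ₂ β ω : ℝ)
    (P Q : SchwartzMap (Sp d) ℝ)
    (hP : ∀ x, -ω * P x + lap γ₁ (⇑P) x + P x * Q x = 0)
    (hQ : ∀ x, -(4 * ω + β) * Q x + lap γ₂ (⇑Q) x + (1 / 2) * (P x) ^ 2 = 0) :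
    (∫ x : Sp d, (gradSq γ₁ (⇑P) x + gradSq γ₂ (⇑Q) x))
      = (((d : ℝ) + 1) / 4) * ∫ x : Sp d, (P x) ^ 2 * Q x := by
  have hKP := integral_gradSq_of_lap_eq γ₁ ω P (SchwartzMap.pairing (.mul ℝ ℝ) P Q) fun x => by
    simp only [SchwartzMap.pairing_apply_apply, ContinuousLinearMap.mul_apply']
    linear_combination hP x
  have hKQ := integral_gradSq_of_lap_eq γ₂ (4 * ω + β) Q
    ((1 / 2 : ℝ) • SchwartzMap.pairing (.mul ℝ ℝ) P P) fun x => by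
    simp only [smul_apply, SchwartzMap.pairing_apply_apply, ContinuousLinearMap.mul_apply',
      smul_eq_mul]
    linear_combination hQ x
  have hN := SchwartzMap.integral_mul_mul_euler_add_sq_mul_euler (μ := volume) P Q
  have hPQP : ∫ x, P x * Q x * P x = ∫ x, P x ^ 2 * Q x :=
    integral_congr_ae (.of_forall fun x => by ring)
  have hPPQ : ∫ x, 1 / 2 * (P x * P x) * Q x = 1 / 2 * ∫ x, P x ^ 2 * Q x := by
    rw [← integral_const_mul]
    exact integral_congr_ae (.of_forall fun x => by ring)
  have hPPE : ∫ x, 1 / 2 * (P x * P x) * SchwartzMap.euler Q x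
      = ∫ x, P x ^ 2 / 2 * SchwartzMap.euler Q x :=
    integral_congr_ae (.of_forall fun x => by ring)
  rw [integral_add (integrable_gradSq γ₁ P) (integrable_gradSq γ₂ Q), hKP, hKQ]
  simp only [SchwartzMap.pairing_apply_apply, ContinuousLinearMap.mul_apply', smul_apply,
    smul_eq_mul, hPQP, hPPQ, hPPE]
  simp only [finrank_euclideanSpace_fin, Nat.cast_add, Nat.cast_one] at hN
  linear_combination hN

/-- Pohozaev-type identity for real Schwartz bound states. -/
theorem pohozaev_identity
    (d : ℕ) (hd : 1 ≤ d) (γ₁ γ₂ β ω : ℝ) (hγ₁ : 0 < γ₁) (hγ₂ : 0 < γ₂)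
    (P Q : SchwartzMap (Sp d) ℝ)
    (hP : ∀ x, -ω * P x + lap γ₁ (⇑P) x + P x * Q x = 0)
    (hQ : ∀ x, -(4 * ω + β) * Q x + lap γ₂ (⇑Q) x + (1 / 2) * (P x) ^ 2 = 0) :
    (∫ x : Sp d, (gradSq γ₁ (⇑P) x + gradSq γ₂ (⇑Q) x))
      = (((d : ℝ) + 1) / 4) * ∫ x : Sp d, (P x) ^ 2 * Q x :=
  pohozaev_identity_general d γ₁ γ₂ β ω P Q hP hQ
end
end

section
/- Mass-preserving dilation minimizes the energy in the subcritical case (core of Lemma 4.2): Let 1 ≤ d ≤ 2, γ₁, γ₂ > 0, β = 0, and let W = (w,z) be a Schwartz pair on ℝ^{d+1} with K(W) > 0 and J(W) > 0. For λ > 0 define W_λ(x) = λ^{(d+1)/2} W(λx) and f(λ) = E(W_λ). Then: (a) f(λ) = ½λ² K(W) − ½λ^{(d+1)/2} J(W); (b) f has a unique global minimizer λ₀ ∈ (0,∞); and (c) the pair Z = W_{λ₀} satisfies K(Z) = ((d+1)/4) J(Z) and E(Z) = ((d−3)/(2(d+1))) K(Z). -/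
noncomputable section

open MeasureTheory Complex Finset

variable {d : ℕ}

/-- The mass-preserving dilation `W_λ(x) = λ^{(d+1)/2} W(λx)` (scalar component). -/
def dil (d : ℕ) (lam : ℝ) (w : Sp d → ℂ) : Sp d → ℂ :=
  fun x => ((lam ^ (((d : ℝ) + 1) / 2) : ℝ) : ℂ) * w (lam • x)

/-- The energy (with `β = 0`) along the dilation: `f(λ) = E(W_λ) = ½K(W_λ) − ½J(W_λ)`. -/
def fdil (d : ℕ) (γ₁ γ₂ : ℝ) (w z : Sp d → ℂ) (lam : ℝ) : ℝ :=
  (1 / 2) * Kfun γ₁ γ₂ (dil d lam w) (dil d lam z)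
    - (1 / 2) * Jfun (dil d lam w) (dil d lam z)

/-!
Under `W ↦ W_λ` the change of variables `y = λx` shows that the kinetic term scales like `λ²`
and the cubic term like `λ^p` with `p = (d+1)/2 < 2`, so `f(λ) = aλ² − bλ^p` with `a, b > 0`.
At the critical point `2aλ₀^(2-p) = pb`, weighted AM–GM
`λ^p λ₀^(2-p) ≤ (p/2)λ² + (1 - p/2)λ₀²` (strict for `λ ≠ λ₀`) makes `λ₀` the strict global
minimum; multiplying the critical-point relation by `λ₀^p` is the virial identity
`K(Z) = (p/2) J(Z)`, which also gives the value of `E(Z)`.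
-/

theorem integral_comp_smul_sp (g : Sp d → ℝ) {lam : ℝ} (hlam : 0 ≤ lam) :
    ∫ x, g (lam • x) = (lam ^ (d + 1))⁻¹ * ∫ x, g x := by
  rw [Measure.integral_comp_smul_of_nonneg volume g lam (hR := hlam), finrank_euclideanSpace_fin,
    smul_eq_mul]

theorem rpow_succ_div_two_sq {lam : ℝ} (hlam : 0 ≤ lam) :
    (lam ^ (((d : ℝ) + 1) / 2)) ^ 2 = lam ^ (d + 1) := by
  rw [← Real.rpow_natCast, ← Real.rpow_mul hlam, ← Real.rpow_natCast]
  congr 1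
  push_cast
  ring

theorem pdv_dil (lam : ℝ) {w : Sp d → ℂ} (hw : Differentiable ℝ w) (j : Fin (d + 1)) (x : Sp d) :
    pdv j (dil d lam w) x
      = ((lam ^ (((d : ℝ) + 1) / 2) : ℝ) : ℂ) * ((lam : ℂ) * pdv j w (lam • x)) := by
  have hscale : HasFDerivAt (fun y : Sp d => lam • y) (lam • ContinuousLinearMap.id ℝ (Sp d)) x :=
    (hasFDerivAt_id x).const_smul lam
  have hdil : HasFDerivAt (dil d lam w) (((lam ^ (((d : ℝ) + 1) / 2) : ℝ) : ℂ) •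
      (fderiv ℝ w (lam • x)).comp (lam • ContinuousLinearMap.id ℝ (Sp d))) x :=
    ((hw (lam • x)).hasFDerivAt.comp x hscale).const_mul _
  rw [pdv, hdil.fderiv]
  simp only [FunLike.coe_smul, ContinuousLinearMap.coe_comp, Function.comp_apply,
    Pi.smul_apply, ContinuousLinearMap.coe_id', id_eq,
    ContinuousLinearMap.map_smul, smul_eq_mul, Complex.real_smul, pdv]

theorem gradSq_dil (γ : ℝ) {lam : ℝ} (hlam : 0 ≤ lam) {w : Sp d → ℂ} (hw : Differentiable ℝ w)
    (x : Sp d) :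
    gradSq γ (dil d lam w) x = lam ^ (d + 1) * lam ^ 2 * gradSq γ w (lam • x) := by
  have hnorm : ∀ v : ℂ, ‖((lam ^ (((d : ℝ) + 1) / 2) : ℝ) : ℂ) * ((lam : ℂ) * v)‖ ^ 2
      = lam ^ (d + 1) * lam ^ 2 * ‖v‖ ^ 2 := fun v => by
    rw [norm_mul, norm_mul, Complex.norm_real, Complex.norm_real, Real.norm_eq_abs,
      Real.norm_eq_abs, mul_pow, mul_pow, sq_abs, sq_abs, rpow_succ_div_two_sq hlam, mul_assoc]
  simp only [gradSq, pdv_dil lam hw, hnorm, ← Finset.mul_sum]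
  ring

theorem Kfun_dil (γ₁ γ₂ : ℝ) {lam : ℝ} (hlam : 0 < lam) {w z : Sp d → ℂ}
    (hw : Differentiable ℝ w) (hz : Differentiable ℝ z) :
    Kfun γ₁ γ₂ (dil d lam w) (dil d lam z) = lam ^ 2 * Kfun γ₁ γ₂ w z := by
  simp only [Kfun, gradSq_dil _ hlam.le hw, gradSq_dil _ hlam.le hz, ← mul_add]
  rw [integral_const_mul, integral_comp_smul_sp (fun y => gradSq γ₁ w y + gradSq γ₂ z y) hlam.le]
  field_simp

theorem Jfun_dil {lam : ℝ} (hlam : 0 < lam) (w z : Sp d → ℂ) :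
    Jfun (dil d lam w) (dil d lam z) = lam ^ (((d : ℝ) + 1) / 2) * Jfun w z := by
  have hA : 0 < lam ^ (((d : ℝ) + 1) / 2) := by positivity
  have hcube : ∀ x, ((starRingEnd ℂ) (dil d lam w x) ^ 2 * dil d lam z x).re
      = (lam ^ (((d : ℝ) + 1) / 2)) ^ 3
        * ((starRingEnd ℂ) (w (lam • x)) ^ 2 * z (lam • x)).re := fun x => by
    rw [← Complex.re_ofReal_mul]
    congr 1
    simp only [dil, map_mul, Complex.conj_ofReal]
    push_cast
    ring
  simp only [Jfun, hcube]
  rw [integral_const_mul, integral_comp_smul_sp (fun y => ((starRingEnd ℂ) (w y) ^ 2 * z y).re)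
    hlam.le, ← rpow_succ_div_two_sq hlam.le]
  field_simp

theorem fdil_eq {γ₁ γ₂ lam : ℝ} (hlam : 0 < lam) {w z : Sp d → ℂ}
    (hw : Differentiable ℝ w) (hz : Differentiable ℝ z) :
    fdil d γ₁ γ₂ w z lam
      = (1 / 2) * lam ^ 2 * Kfun γ₁ γ₂ w z - (1 / 2) * lam ^ (((d : ℝ) + 1) / 2) * Jfun w z := by
  rw [fdil, Kfun_dil γ₁ γ₂ hlam hw hz, Jfun_dil hlam]
  ring

theorem sq_eq_rpow_two_sub_mul_rpow {x : ℝ} (hx : 0 < x) (p : ℝ) :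
    x ^ 2 = x ^ (2 - p) * x ^ p := by
  rw [← Real.rpow_add hx]
  norm_num

theorem sq_sub_rpow_lt_of_ne {a b p l₀ l : ℝ} (ha : 0 < a) (hp : 0 < p) (hp2 : p < 2)
    (hl₀ : 0 < l₀) (hl : 0 < l) (hcrit : 2 * a * l₀ ^ (2 - p) = p * b) (hne : l ≠ l₀) :
    a * l₀ ^ 2 - b * l₀ ^ p < a * l ^ 2 - b * l ^ p := by
  have hsq : l ^ 2 ≠ l₀ ^ 2 := (pow_left_inj₀ hl.le hl₀.le two_ne_zero).not.mpr hne
  have amgm := (Real.geom_mean_lt_arith_mean2_weighted_iff_of_pos (w₁ := p / 2) (w₂ := 1 - p / 2)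
    (by positivity) (by linarith) (sq_nonneg l) (sq_nonneg l₀) (by ring)).2 hsq
  have hl_pow : (l ^ 2) ^ (p / 2) = l ^ p := by
    rw [← Real.rpow_natCast, ← Real.rpow_mul hl.le]; congr 1; ring
  have hl₀_pow : (l₀ ^ 2) ^ (1 - p / 2) = l₀ ^ (2 - p) := by
    rw [← Real.rpow_natCast, ← Real.rpow_mul hl₀.le]; ring_nf
  rw [hl_pow, hl₀_pow] at amgm
  have key : p * (a * l₀ ^ 2 - b * l₀ ^ p) < p * (a * l ^ 2 - b * l ^ p) := by
    linear_combination (2 * a) * amgm + (l₀ ^ p - l ^ p) * hcrit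
      + 2 * a * sq_eq_rpow_two_sub_mul_rpow hl₀ p
  exact lt_of_mul_lt_mul_left key hp.le

theorem exists_strict_min_sq_sub_rpow {a b p : ℝ} (ha : 0 < a) (hb : 0 < b) (hp : 0 < p)
    (hp2 : p < 2) :
    ∃ l₀, 0 < l₀ ∧ 2 * a * l₀ ^ (2 - p) = p * b ∧
      ∀ l, 0 < l → l ≠ l₀ → a * l₀ ^ 2 - b * l₀ ^ p < a * l ^ 2 - b * l ^ p := by
  have hc : 0 < p * b / (2 * a) := by positivity
  have hcrit : 2 * a * ((p * b / (2 * a)) ^ (2 - p)⁻¹) ^ (2 - p) = p * b := by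
    rw [Real.rpow_inv_rpow hc.le (by linarith)]
    field_simp
  exact ⟨_, by positivity, hcrit, fun l hl hne =>
    sq_sub_rpow_lt_of_ne ha hp hp2 (by positivity) hl hcrit hne⟩

theorem dilation_minimizes_energy_general
    (d : ℕ) (hd2 : d ≤ 2) (γ₁ γ₂ : ℝ)
    (w z : SchwartzMap (Sp d) ℂ)
    (hK : 0 < Kfun γ₁ γ₂ (⇑w) (⇑z)) (hJ : 0 < Jfun (⇑w) (⇑z)) :
    (∀ lam : ℝ, 0 < lam →
      fdil d γ₁ γ₂ (⇑w) (⇑z) lam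
        = (1 / 2) * lam ^ 2 * Kfun γ₁ γ₂ (⇑w) (⇑z)
          - (1 / 2) * lam ^ (((d : ℝ) + 1) / 2) * Jfun (⇑w) (⇑z))
    ∧ ∃ lam₀ : ℝ, 0 < lam₀
        ∧ (∀ lam : ℝ, 0 < lam → fdil d γ₁ γ₂ (⇑w) (⇑z) lam₀ ≤ fdil d γ₁ γ₂ (⇑w) (⇑z) lam)
        ∧ (∀ lam' : ℝ, 0 < lam' →
            (∀ lam : ℝ, 0 < lam → fdil d γ₁ γ₂ (⇑w) (⇑z) lam' ≤ fdil d γ₁ γ₂ (⇑w) (⇑z) lam)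
            → lam' = lam₀)
        ∧ Kfun γ₁ γ₂ (dil d lam₀ (⇑w)) (dil d lam₀ (⇑z))
            = (((d : ℝ) + 1) / 4) * Jfun (dil d lam₀ (⇑w)) (dil d lam₀ (⇑z))
        ∧ fdil d γ₁ γ₂ (⇑w) (⇑z) lam₀
            = (((d : ℝ) - 3) / (2 * ((d : ℝ) + 1)))
                * Kfun γ₁ γ₂ (dil d lam₀ (⇑w)) (dil d lam₀ (⇑z)) := by
  have hp2 : ((d : ℝ) + 1) / 2 < 2 := by
    have : (d : ℝ) ≤ 2 := by exact_mod_cast hd2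
    linarith
  set p := ((d : ℝ) + 1) / 2
  have hf : ∀ lam : ℝ, 0 < lam →
      fdil d γ₁ γ₂ w z lam = Kfun γ₁ γ₂ w z / 2 * lam ^ 2 - Jfun w z / 2 * lam ^ p :=
    fun lam hlam => by rw [fdil_eq hlam w.differentiable z.differentiable]; ring
  obtain ⟨l₀, hl₀, hcrit, hmin⟩ :=
    exists_strict_min_sq_sub_rpow (half_pos hK) (half_pos hJ) (by positivity) hp2
  have hvirial :
      Kfun γ₁ γ₂ (dil d l₀ w) (dil d l₀ z) = p / 2 * Jfun (dil d l₀ w) (dil d l₀ z) := by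
    rw [Kfun_dil γ₁ γ₂ hl₀ w.differentiable z.differentiable, Jfun_dil hl₀,
      sq_eq_rpow_two_sub_mul_rpow hl₀ p]
    linear_combination l₀ ^ p * hcrit
  refine ⟨fun lam hlam => by rw [hf lam hlam]; ring, l₀, hl₀, fun lam hlam => ?_,
    fun l' hl' hl'min => ?_, by rw [hvirial]; ring, ?_⟩
  · rcases eq_or_ne lam l₀ with rfl | hne
    · rfl
    · rw [hf lam hlam, hf l₀ hl₀]
      exact (hmin lam hlam hne).le
  · by_contra hne
    have := hl'min l₀ hl₀
    rw [hf l' hl', hf l₀ hl₀] at this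
    linarith [hmin l' hl' hne]
  · rw [fdil, hvirial]
    field_simp
    ring

/-- mass-preserving dilation minimizes the energy in the subcritical case:
(a) `f(λ) = ½λ²K(W) − ½λ^{(d+1)/2}J(W)`; (b) `f` has a unique global minimizer
`λ₀ ∈ (0,∞)`; (c) `Z = W_{λ₀}` satisfies `K(Z) = ((d+1)/4)J(Z)` and
`E(Z) = ((d−3)/(2(d+1)))K(Z)`. -/
theorem dilation_minimizes_energy
    (d : ℕ) (hd1 : 1 ≤ d) (hd2 : d ≤ 2) (γ₁ γ₂ : ℝ) (hγ₁ : 0 < γ₁) (hγ₂ : 0 < γ₂)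
    (w z : SchwartzMap (Sp d) ℂ)
    (hK : 0 < Kfun γ₁ γ₂ (⇑w) (⇑z)) (hJ : 0 < Jfun (⇑w) (⇑z)) :
    (∀ lam : ℝ, 0 < lam →
      fdil d γ₁ γ₂ (⇑w) (⇑z) lam
        = (1 / 2) * lam ^ 2 * Kfun γ₁ γ₂ (⇑w) (⇑z)
          - (1 / 2) * lam ^ (((d : ℝ) + 1) / 2) * Jfun (⇑w) (⇑z))
    ∧ ∃ lam₀ : ℝ, 0 < lam₀
        ∧ (∀ lam : ℝ, 0 < lam → fdil d γ₁ γ₂ (⇑w) (⇑z) lam₀ ≤ fdil d γ₁ γ₂ (⇑w) (⇑z) lam)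
        ∧ (∀ lam' : ℝ, 0 < lam' →
            (∀ lam : ℝ, 0 < lam → fdil d γ₁ γ₂ (⇑w) (⇑z) lam' ≤ fdil d γ₁ γ₂ (⇑w) (⇑z) lam)
            → lam' = lam₀)
        ∧ Kfun γ₁ γ₂ (dil d lam₀ (⇑w)) (dil d lam₀ (⇑z))
            = (((d : ℝ) + 1) / 4) * Jfun (dil d lam₀ (⇑w)) (dil d lam₀ (⇑z))
        ∧ fdil d γ₁ γ₂ (⇑w) (⇑z) lam₀
            = (((d : ℝ) - 3) / (2 * ((d : ℝ) + 1)))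
                * Kfun γ₁ γ₂ (dil d lam₀ (⇑w)) (dil d lam₀ (⇑z)) :=
  dilation_minimizes_energy_general d hd2 γ₁ γ₂ w z hK hJ
end
end
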